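/- arXiv:math/0012031 — 7 statements merged into one kernel-verified Lean document; each statement's English description precedes it below -/
import Mathlib

section
/- Let A be an associative ring with 1 and let M be an invertible n×n matrix over A[[z]] whose constant-coefficient matrix is the identity (i.e. M ≡ 1 modulo z). Then there exists a finite product E of transvection matrices over A[[z]] (matrices of the form 1 + c·E_{ij} with i ≠ j and c ∈ A[[z]]) such that E·M is upper triangular and every diagonal entry of E·M is a Witt vector, i.e. a power series with constant coefficient 1 (necessarily a unit of A[[z]]). -/
/-!
Gaussian elimination below the diagonal, column by column, keeping the reduction modulo `z`
equal to the identity matrix. The multiplier `-N i j * (N j j)⁻¹` clearing the entry `(i, j)`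
has zero constant coefficient because `N i j` does, so the transvection it defines is `≡ 1 mod z`.
Hence every pivot stays `≡ 1 mod z`, in particular invertible, and the diagonal of the final
triangular matrix consists of Witt vectors. Only locality of `constantCoeff` is used.
-/

open Matrix

instance PowerSeries.isLocalHom_constantCoeff {A : Type*} [Ring A] :
    IsLocalHom (PowerSeries.constantCoeff (R := A)) :=
  ⟨fun _ => PowerSeries.isUnit_iff_constantCoeff.mpr⟩

section Elimination

variable {R S : Type*} [Ring R] [Ring S] {n : ℕ}

def IsTransvection (T : Matrix (Fin n) (Fin n) R) : Prop :=
  ∃ (i j : Fin n) (c : R), i ≠ j ∧ T = 1 + single i j c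

def RowReducesTo (N N' : Matrix (Fin n) (Fin n) R) : Prop :=
  ∃ L : List (Matrix (Fin n) (Fin n) R), (∀ T ∈ L, IsTransvection T) ∧ N' = L.prod * N

namespace RowReducesTo

theorem refl (N : Matrix (Fin n) (Fin n) R) : RowReducesTo N N :=
  ⟨[], by simp, by simp⟩

theorem trans {N N' N'' : Matrix (Fin n) (Fin n) R}
    (h : RowReducesTo N N') (h' : RowReducesTo N' N'') : RowReducesTo N N'' := by
  obtain ⟨L, hL, rfl⟩ := h
  obtain ⟨L', hL', rfl⟩ := h'
  refine ⟨L' ++ L, fun T hT => ?_, by rw [List.prod_append, mul_assoc]⟩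
  exact (List.mem_append.mp hT).elim (hL' T) (hL T)

theorem transvection_mul {i j : Fin n} (hij : i ≠ j) (c : R) (N : Matrix (Fin n) (Fin n) R) :
    RowReducesTo N ((1 + single i j c) * N) :=
  ⟨[1 + single i j c], by simpa using ⟨i, j, c, hij, rfl⟩, by simp⟩

end RowReducesTo

theorem transvection_mul_apply (i j : Fin n) (c : R) (N : Matrix (Fin n) (Fin n) R)
    (r s : Fin n) : ((1 + single i j c) * N) r s = N r s + if r = i then c * N j s else 0 := by
  rw [add_mul, one_mul, Matrix.add_apply]
  split_ifs with hr
  · rw [hr, single_mul_apply_same]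
  · rw [single_mul_apply_of_ne _ _ _ _ _ hr]

def ClearedBelowDiagonal (k : ℕ) (N : Matrix (Fin n) (Fin n) R) : Prop :=
  ∀ i j : Fin n, j < i → (j : ℕ) < k → N i j = 0

section MapEqOne

variable (f : R →+* S) {N : Matrix (Fin n) (Fin n) R}

theorem map_transvection_mul_eq_one (hN : N.map f = 1) (i j : Fin n) {c : R} (hc : f c = 0) :
    ((1 + single i j c) * N).map f = 1 := by
  rw [Matrix.map_mul, hN, mul_one, Matrix.map_add _ (map_add f),
    Matrix.map_one f (map_zero f) (map_one f), map_single, hc, single_zero, add_zero]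

variable {f}

theorem apply_self_of_map_eq_one (hN : N.map f = 1) (i : Fin n) : f (N i i) = 1 := by
  simpa using congr_fun₂ hN i i

theorem apply_of_map_eq_one_of_ne (hN : N.map f = 1) {i j : Fin n} (hij : i ≠ j) :
    f (N i j) = 0 := by
  simpa [hij] using congr_fun₂ hN i j

theorem isUnit_apply_self_of_map_eq_one [IsLocalHom f] (hN : N.map f = 1) (i : Fin n) :
    IsUnit (N i i) :=
  IsUnit.of_map f _ (by rw [apply_self_of_map_eq_one hN]; exact isUnit_one)

theorem exists_rowReducesTo_apply_eq_zero [IsLocalHom f] (hN : N.map f = 1) {i j : Fin n}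
    (hij : i ≠ j) :
    ∃ N', RowReducesTo N N' ∧ N'.map f = 1 ∧ N' i j = 0 ∧
      ∀ r s, (r ≠ i ∨ N j s = 0) → N' r s = N r s := by
  obtain ⟨u, hu⟩ := isUnit_apply_self_of_map_eq_one hN j
  have hc : f (-(N i j * ↑u⁻¹)) = 0 := by simp [apply_of_map_eq_one_of_ne hN hij]
  refine ⟨_, .transvection_mul hij _ N, map_transvection_mul_eq_one f hN i j hc, ?_, ?_⟩
  · rw [transvection_mul_apply, if_pos rfl, ← hu, neg_mul, mul_assoc, Units.inv_mul, mul_one,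
      add_neg_cancel]
  · rintro r s (hr | hs) <;> simp [transvection_mul_apply, *]

theorem exists_rowReducesTo_clear_column_upTo [IsLocalHom f] (hN : N.map f = 1) (j : Fin n)
    (hj : ClearedBelowDiagonal j N) (m : ℕ) :
    ∃ N', RowReducesTo N N' ∧ N'.map f = 1 ∧ ClearedBelowDiagonal j N' ∧
      ∀ i : Fin n, j < i → (i : ℕ) < m → N' i j = 0 := by
  induction m with
  | zero => exact ⟨N, .refl N, hN, hj, fun _ _ h => absurd h (Nat.not_lt_zero _)⟩
  | succ m ih =>
    obtain ⟨P, hNP, hP, hPj, hPcol⟩ := ih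
    by_cases hm : ∃ i : Fin n, j < i ∧ (i : ℕ) = m
    · obtain ⟨i, hji, rfl⟩ := hm
      obtain ⟨Q, hPQ, hQ, hQij, hQP⟩ := exists_rowReducesTo_apply_eq_zero hP hji.ne'
      refine ⟨Q, hNP.trans hPQ, hQ, fun r s hsr hs => ?_, fun r hjr hr => ?_⟩
      · rw [hQP r s (.inr (hPj j s hs hs)), hPj r s hsr hs]
      · obtain rfl | hri := eq_or_ne r i
        · exact hQij
        · rw [hQP r j (.inl hri)]
          exact hPcol r hjr (by omega)
    · refine ⟨P, hNP, hP, hPj, fun i hji hi => hPcol i hji ?_⟩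
      exact lt_of_le_of_ne (Nat.lt_succ_iff.mp hi) fun h => hm ⟨i, hji, h⟩

theorem exists_rowReducesTo_clearedBelowDiagonal [IsLocalHom f] (hN : N.map f = 1) (k : ℕ) :
    ∃ N', RowReducesTo N N' ∧ N'.map f = 1 ∧ ClearedBelowDiagonal k N' := by
  induction k with
  | zero => exact ⟨N, .refl N, hN, fun _ _ _ h => absurd h (Nat.not_lt_zero _)⟩
  | succ k ih =>
    obtain ⟨P, hNP, hP, hPk⟩ := ih
    by_cases hk : k < n
    · obtain ⟨Q, hPQ, hQ, hQk, hQcol⟩ :=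
        exists_rowReducesTo_clear_column_upTo hP ⟨k, hk⟩ hPk n
      refine ⟨Q, hNP.trans hPQ, hQ, fun i j hji hj => ?_⟩
      rcases Nat.lt_succ_iff_lt_or_eq.mp hj with hj | hj
      · exact hQk i j hji hj
      · obtain rfl : j = ⟨k, hk⟩ := Fin.ext hj
        exact hQcol i hji i.isLt
    · exact ⟨P, hNP, hP, fun i j hji _ => hPk i j hji (by omega)⟩

theorem exists_rowReducesTo_blockTriangular [IsLocalHom f] (hN : N.map f = 1) :
    ∃ N', RowReducesTo N N' ∧ N'.map f = 1 ∧ N'.BlockTriangular id := by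
  obtain ⟨N', hNN', hN', hcleared⟩ := exists_rowReducesTo_clearedBelowDiagonal hN n
  exact ⟨N', hNN', hN', fun i j hji => hcleared i j hji j.isLt⟩

end MapEqOne

end Elimination

theorem reduction_to_triangular_with_witt_vector_diagonal_general
    (A : Type*) [Ring A] (n : ℕ) (M : Matrix (Fin n) (Fin n) (PowerSeries A))
    (h0 : M.map (PowerSeries.constantCoeff (R := A)) = 1) :
    ∃ L : List (Matrix (Fin n) (Fin n) (PowerSeries A)),
      (∀ T ∈ L, ∃ (i j : Fin n) (c : PowerSeries A),
        i ≠ j ∧ T = 1 + Matrix.single i j c) ∧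
      (∀ i j : Fin n, j < i → (L.prod * M) i j = 0) ∧
      (∀ i : Fin n,
        PowerSeries.constantCoeff (R := A) ((L.prod * M) i i) = 1 ∧
        IsUnit ((L.prod * M) i i)) := by
  obtain ⟨N, ⟨L, hL, rfl⟩, hN, htri⟩ := exists_rowReducesTo_blockTriangular h0
  exact ⟨L, hL, fun _ _ hji => htri hji,
    fun i => ⟨apply_self_of_map_eq_one hN i, isUnit_apply_self_of_map_eq_one hN i⟩⟩

theorem reduction_to_triangular_with_witt_vector_diagonal
    (A : Type*) [Ring A] (n : ℕ) (M : Matrix (Fin n) (Fin n) (PowerSeries A))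
    (hM : IsUnit M) (h0 : M.map (PowerSeries.constantCoeff (R := A)) = 1) :
    ∃ L : List (Matrix (Fin n) (Fin n) (PowerSeries A)),
      (∀ T ∈ L, ∃ (i j : Fin n) (c : PowerSeries A),
        i ≠ j ∧ T = 1 + Matrix.single i j c) ∧
      (∀ i j : Fin n, j < i → (L.prod * M) i j = 0) ∧
      (∀ i : Fin n,
        PowerSeries.constantCoeff (R := A) ((L.prod * M) i i) = 1 ∧
        IsUnit ((L.prod * M) i i)) :=
  reduction_to_triangular_with_witt_vector_diagonal_general A n M h0
end

section
/- Let A be an associative ring with 1. Let M be an invertible n×n matrix over the Novikov ring A((z)) with inverse M⁻¹, and let k, ℓ be natural numbers such that every entry of z^k·M and every entry of z^ℓ·M⁻¹ lies in the subring A[[z]]. Let P be the quotient of A[[z]]^n (as a right A-module) by the right A[[z]]-submodule { (z^k·M)·v : v ∈ A[[z]]^n }, and let Q be the quotient of A[[z]]^n by { (z^ℓ·M⁻¹)·v : v ∈ A[[z]]^n }. Then P ⊕ Q is isomorphic as a right A-module to the free right A-module A^{n(k+ℓ)}; in particular P is a finitely generated projective right A-module. -/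
/-!
Write `φ`, `φ'` for multiplication by `N = z^k M` and `N' = z^ℓ M⁻¹` on `A[[z]]^n`. Then
`φ ∘ φ'` is multiplication by `z^(k+ℓ)`, whose cokernel is `A^(n(k+ℓ))` (the coefficients of
degree `< k + ℓ`). Moreover `φ` has a right `A`-linear left inverse: multiply by `z^(-k) M⁻¹` in
`A((z))^n` and truncate to degrees `≥ 0`. For a split injection `φ` the cokernel of `φ ∘ φ'` is
`coker φ × coker φ'`, so `P × Q ≅ A^(n(k+ℓ))` and `P` is a direct summand of a finite free module.
-/

namespace PowerSeries

variable {A : Type*} [Semiring A]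

theorem op_smul_eq_mul_C (a : Aᵐᵒᵖ) (f : PowerSeries A) : a • f = f * C a.unop := by
  ext m
  rw [coeff_mul_C, coeff_smul]
  rfl

instance : SMulCommClass Aᵐᵒᵖ (PowerSeries A) (PowerSeries A) where
  smul_comm a f g := by simp only [smul_eq_mul, op_smul_eq_mul_C, mul_assoc]

end PowerSeries

namespace HahnSeries

variable {Γ A : Type*} [Semiring A]

theorem commute_single_one [AddCommGroup Γ] [PartialOrder Γ] [IsOrderedAddMonoid Γ] (g : Γ)
    (x : HahnSeries Γ A) : Commute (single g 1) x := by
  ext a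
  rw [coeff_single_mul, coeff_mul_single, one_mul, mul_one]

section OrderedCancelMonoid

variable [AddCommMonoid Γ] [PartialOrder Γ] [IsOrderedCancelAddMonoid Γ]

theorem op_smul_eq_mul_single (a : Aᵐᵒᵖ) (x : HahnSeries Γ A) :
    a • x = x * single 0 a.unop := by
  ext g
  rw [coeff_mul_single_zero, coeff_smul]
  rfl

instance : SMulCommClass Aᵐᵒᵖ (HahnSeries Γ A) (HahnSeries Γ A) where
  smul_comm a x y := by simp only [smul_eq_mul, op_smul_eq_mul_single, mul_assoc]

end OrderedCancelMonoid

theorem ofPowerSeries_op_smul [Semiring Γ] [PartialOrder Γ] [IsStrictOrderedRing Γ] (a : Aᵐᵒᵖ)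
    (f : PowerSeries A) : ofPowerSeries Γ A (a • f) = a • ofPowerSeries Γ A f := by
  rw [PowerSeries.op_smul_eq_mul_C, op_smul_eq_mul_single, map_mul, ofPowerSeries_C, C_apply]

noncomputable def ofPowerSeriesOpLinearMap (Γ : Type*) [Semiring Γ] [PartialOrder Γ]
    [IsStrictOrderedRing Γ] : PowerSeries A →ₗ[Aᵐᵒᵖ] HahnSeries Γ A where
  toFun := ofPowerSeries Γ A
  map_add' := map_add _
  map_smul' := ofPowerSeries_op_smul

variable (S : Type*) [Semiring S] [Module S A]

noncomputable def nonnegPart : HahnSeries ℤ A →ₗ[S] PowerSeries A where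
  toFun x := PowerSeries.mk fun j => x.coeff j
  map_add' x y := by ext; simp
  map_smul' s x := by ext; simp

theorem nonnegPart_ofPowerSeries (f : PowerSeries A) :
    nonnegPart S (ofPowerSeries ℤ A f) = f := by
  ext j
  simp [nonnegPart]

end HahnSeries

namespace Matrix

variable {n R : Type*} [Fintype n] [Semiring R]

theorem smul_mul_smul_of_commute (c d : R) (hd : ∀ x, Commute d x) (M M' : Matrix n n R) :
    (c • M) * (d • M') = (c * d) • (M * M') := by
  ext i j
  simp only [mul_apply, smul_apply, smul_eq_mul, Finset.mul_sum]
  refine Finset.sum_congr rfl fun l _ => ?_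
  rw [mul_assoc, ← mul_assoc (M i l), ← (hd (M i l)).eq]
  simp only [mul_assoc]

end Matrix

namespace LinearMap

variable {S U V W : Type*} [Ring S] [AddCommGroup U] [AddCommGroup V] [AddCommGroup W]
  [Module S U] [Module S V] [Module S W]

/-- Since `τ` splits `f`, `W ≅ f(V) ⊕ ker τ`, and `f` carries `V / range g` onto
`f(V) / range (f ∘ g)`. -/
noncomputable def quotRangeCompEquivProd (f : V →ₗ[S] W) (g : U →ₗ[S] V) (τ : W →ₗ[S] V)
    (hτ : Function.LeftInverse τ f) :
    (W ⧸ range (f ∘ₗ g)) ≃ₗ[S] (W ⧸ range f) × (V ⧸ range g) :=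
  let π := (range f).mkQ.prod ((range g).mkQ ∘ₗ τ)
  have hπ : ∀ w, π w = 0 ↔ w ∈ range f ∧ τ w ∈ range g := fun w => by
    simp [π, Prod.ext_iff, Submodule.Quotient.mk_eq_zero]
  have hker : ker π = range (f ∘ₗ g) := by
    ext w
    rw [mem_ker, hπ]
    constructor
    · rintro ⟨⟨v, rfl⟩, u, hu⟩
      exact ⟨u, by rw [comp_apply, hu, hτ]⟩
    · rintro ⟨u, rfl⟩
      exact ⟨⟨g u, rfl⟩, u, (hτ (g u)).symm⟩
  have hsurj : Function.Surjective π := by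
    rintro ⟨x, y⟩
    obtain ⟨w, rfl⟩ := (range f).mkQ_surjective x
    obtain ⟨v, rfl⟩ := (range g).mkQ_surjective y
    refine ⟨w - f (τ w) + f v, Prod.ext ?_ ?_⟩
    · exact (Submodule.Quotient.eq _).2 ⟨v - τ w, by rw [map_sub]; abel⟩
    · simp [π, hτ _]
  (Submodule.quotEquivOfEq _ _ hker.symm).trans (π.quotKerEquivOfSurjective hsurj)

end LinearMap

namespace PowerSeries

variable {R : Type*} (S ι : Type*)

section Semiring

variable [Semiring R] [Semiring S] [Module S R]

noncomputable def coeffsBelow (m : ℕ) : (ι → PowerSeries R) →ₗ[S] (ι × Fin m → R) where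
  toFun f p := coeff p.2 (f p.1)
  map_add' f g := by ext; simp
  map_smul' s f := by ext; simp

theorem mem_ker_coeffsBelow {m : ℕ} {f : ι → PowerSeries R} :
    f ∈ LinearMap.ker (coeffsBelow S ι m) ↔ ∀ i, X ^ m ∣ f i := by
  simp only [LinearMap.mem_ker, funext_iff, X_pow_dvd_iff, Prod.forall, Fin.forall_iff]
  rfl

theorem coeffsBelow_surjective (m : ℕ) :
    Function.Surjective (coeffsBelow (R := R) S ι m) := by
  classical
  intro a
  refine ⟨fun i => ∑ j : Fin m, monomial j (a (i, j)), funext fun p => ?_⟩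
  simp [coeffsBelow, coeff_monomial, Fin.val_inj]

variable {S ι}

theorem range_eq_ker_coeffsBelow {m : ℕ} (L : (ι → PowerSeries R) →ₗ[S] (ι → PowerSeries R))
    (hL : ∀ v, L v = (X : PowerSeries R) ^ m • v) :
    LinearMap.range L = LinearMap.ker (coeffsBelow S ι m) := by
  ext f
  rw [LinearMap.mem_range, mem_ker_coeffsBelow]
  constructor
  · rintro ⟨v, rfl⟩ i
    exact ⟨v i, by rw [hL, Pi.smul_apply, smul_eq_mul]⟩
  · intro hf
    choose v hv using hf
    exact ⟨v, by rw [hL]; exact funext fun i => (hv i).symm⟩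

end Semiring

variable {S ι} [Ring R] [Ring S] [Module S R]

noncomputable def quotRangeEquivOfEqXPowSMul {m : ℕ}
    (L : (ι → PowerSeries R) →ₗ[S] (ι → PowerSeries R))
    (hL : ∀ v, L v = (X : PowerSeries R) ^ m • v) :
    ((ι → PowerSeries R) ⧸ LinearMap.range L) ≃ₗ[S] (ι × Fin m → R) :=
  (Submodule.quotEquivOfEq _ _ (range_eq_ker_coeffsBelow L hL)).trans
    (LinearMap.quotKerEquivOfSurjective _ (coeffsBelow_surjective S ι m))

end PowerSeries

namespace Matrix

variable {m n R S : Type*} [Fintype n] [Semiring R] [Semiring S] [Module S R] [SMulCommClass S R R]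

theorem span_setOf_eq_mulVec_eq_range (N : Matrix m n R) :
    Submodule.span S {w | ∃ v, w = N *ᵥ v} = LinearMap.range (mulVecBilin R S N) := by
  rw [← Submodule.span_eq (LinearMap.range (mulVecBilin R S N))]
  congr 1
  ext w
  simp [eq_comm]

end Matrix

section LeftInverse

open HahnSeries Matrix

variable {A : Type*} [Semiring A]

theorem exists_leftInverse_mulVecBilin_of_mul_map_eq_one {m n : Type*} [Fintype m] [Fintype n]
    [DecidableEq n] (N : Matrix m n (PowerSeries A)) (T : Matrix n m (HahnSeries ℤ A))
    (hT : T * N.map (ofPowerSeries ℤ A) = 1) :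
    ∃ τ : (m → PowerSeries A) →ₗ[Aᵐᵒᵖ] (n → PowerSeries A),
      Function.LeftInverse τ (mulVecBilin (PowerSeries A) Aᵐᵒᵖ N) := by
  refine ⟨(nonnegPart Aᵐᵒᵖ).compLeft n ∘ₗ mulVecBilin (HahnSeries ℤ A) Aᵐᵒᵖ T ∘ₗ
    (ofPowerSeriesOpLinearMap ℤ).compLeft m, fun v => ?_⟩
  have hmap : ofPowerSeries ℤ A ∘ (N *ᵥ v) =
      N.map (ofPowerSeries ℤ A) *ᵥ (ofPowerSeries ℤ A ∘ v) :=
    funext (RingHom.map_mulVec _ N v)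
  change (nonnegPart Aᵐᵒᵖ).compLeft n (T *ᵥ (ofPowerSeries ℤ A ∘ (N *ᵥ v))) = v
  rw [hmap, mulVec_mulVec, hT, one_mulVec]
  exact funext fun i => nonnegPart_ofPowerSeries Aᵐᵒᵖ (v i)

variable {n : Type*} [Fintype n] [DecidableEq n]
  {M M' : Matrix n n (HahnSeries ℤ A)} {N N' : Matrix n n (PowerSeries A)} {k ℓ : ℕ}

theorem exists_leftInverse_mulVecBilin_of_smul_eq_map (hM'M : M' * M = 1)
    (hN : single (1 : ℤ) (1 : A) ^ k • M = N.map (ofPowerSeries ℤ A)) :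
    ∃ τ : (n → PowerSeries A) →ₗ[Aᵐᵒᵖ] (n → PowerSeries A),
      Function.LeftInverse τ (mulVecBilin (PowerSeries A) Aᵐᵒᵖ N) := by
  refine exists_leftInverse_mulVecBilin_of_mul_map_eq_one N (single (-1 : ℤ) (1 : A) ^ k • M') ?_
  rw [← hN, smul_mul_smul_of_commute _ _ fun x => (commute_single_one 1 x).pow_left k, hM'M,
    ← (commute_single_one _ _).mul_pow, single_mul_single, neg_add_cancel, one_mul,
    single_zero_one, one_pow, one_smul]

theorem mul_eq_X_pow_smul_one_of_smul_eq_map (hMM' : M * M' = 1)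
    (hN : single (1 : ℤ) (1 : A) ^ k • M = N.map (ofPowerSeries ℤ A))
    (hN' : single (1 : ℤ) (1 : A) ^ ℓ • M' = N'.map (ofPowerSeries ℤ A)) :
    N * N' = (PowerSeries.X : PowerSeries A) ^ (k + ℓ) • (1 : Matrix n n (PowerSeries A)) := by
  apply map_injective (ofPowerSeries_injective (Γ := ℤ) (R := A))
  dsimp only
  rw [Matrix.map_mul, ← hN, ← hN',
    smul_mul_smul_of_commute _ _ fun x => (commute_single_one 1 x).pow_left ℓ, hMM',
    ← _root_.pow_add, Matrix.map_smul' _ _ _ (map_mul _), map_pow, ofPowerSeries_X,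
    Matrix.map_one _ (map_zero _) (map_one _)]

end LeftInverse

instance MulOpposite.instModuleFreeSelf {A : Type*} [Semiring A] : Module.Free Aᵐᵒᵖ A :=
  .of_equiv (MulOpposite.opLinearEquiv Aᵐᵒᵖ).symm

instance MulOpposite.instModuleFiniteSelf {A : Type*} [Semiring A] : Module.Finite Aᵐᵒᵖ A :=
  .equiv (MulOpposite.opLinearEquiv Aᵐᵒᵖ).symm

section DirectSummand

variable {S M N F : Type*} [Semiring S] [AddCommMonoid M] [AddCommMonoid N] [AddCommMonoid F]
  [Module S M] [Module S N] [Module S F]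

theorem Module.Finite.of_prod_linearEquiv [Module.Finite S F] (e : (M × N) ≃ₗ[S] F) :
    Module.Finite S M :=
  .of_surjective (LinearMap.fst S M N ∘ₗ e.symm.toLinearMap) fun x => ⟨e (x, 0), by simp⟩

theorem Module.Projective.of_prod_linearEquiv [Module.Projective S F] (e : (M × N) ≃ₗ[S] F) :
    Module.Projective S M :=
  .of_split (e.toLinearMap ∘ₗ LinearMap.inl S M N) (LinearMap.fst S M N ∘ₗ e.symm.toLinearMap)
    (by ext x; simp)

end DirectSummand

theorem novikov_cokernel_fg_projective (A : Type*) [Ring A] (n k ℓ : ℕ)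
    (M M' : Matrix (Fin n) (Fin n) (HahnSeries ℤ A))
    (hMM' : M * M' = 1) (hM'M : M' * M = 1)
    (N N' : Matrix (Fin n) (Fin n) (PowerSeries A))
    (hN : ((HahnSeries.single (1 : ℤ) (1 : A)) ^ k) • M =
      N.map (HahnSeries.ofPowerSeries ℤ A))
    (hN' : ((HahnSeries.single (1 : ℤ) (1 : A)) ^ ℓ) • M' =
      N'.map (HahnSeries.ofPowerSeries ℤ A)) :
    Nonempty
      ((((Fin n → PowerSeries A) ⧸
          Submodule.span Aᵐᵒᵖ {w : Fin n → PowerSeries A | ∃ v, w = N.mulVec v}) ×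
        ((Fin n → PowerSeries A) ⧸
          Submodule.span Aᵐᵒᵖ {w : Fin n → PowerSeries A | ∃ v, w = N'.mulVec v}))
        ≃ₗ[Aᵐᵒᵖ] (Fin (n * (k + ℓ)) → A)) ∧
    Module.Finite Aᵐᵒᵖ
      ((Fin n → PowerSeries A) ⧸
        Submodule.span Aᵐᵒᵖ {w : Fin n → PowerSeries A | ∃ v, w = N.mulVec v}) ∧
    Module.Projective Aᵐᵒᵖ
      ((Fin n → PowerSeries A) ⧸
        Submodule.span Aᵐᵒᵖ {w : Fin n → PowerSeries A | ∃ v, w = N.mulVec v}) := by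
  obtain ⟨τ, hτ⟩ := exists_leftInverse_mulVecBilin_of_smul_eq_map hM'M hN
  let φ := Matrix.mulVecBilin (PowerSeries A) Aᵐᵒᵖ N
  let φ' := Matrix.mulVecBilin (PowerSeries A) Aᵐᵒᵖ N'
  have hφφ' : ∀ v, (φ ∘ₗ φ') v = (PowerSeries.X : PowerSeries A) ^ (k + ℓ) • v := fun v => by
    simp only [φ, φ', LinearMap.comp_apply, Matrix.mulVecBilin_apply, Matrix.mulVec_mulVec,
      mul_eq_X_pow_smul_one_of_smul_eq_map hMM' hN hN', Matrix.smul_mulVec, Matrix.one_mulVec]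
  rw [Matrix.span_setOf_eq_mulVec_eq_range, Matrix.span_setOf_eq_mulVec_eq_range]
  let e := (φ.quotRangeCompEquivProd φ' τ hτ).symm ≪≫ₗ
    PowerSeries.quotRangeEquivOfEqXPowSMul _ hφφ' ≪≫ₗ
    LinearEquiv.funCongrLeft Aᵐᵒᵖ A finProdFinEquiv.symm
  exact ⟨⟨e⟩, .of_prod_linearEquiv e, .of_prod_linearEquiv e⟩
end

section
/- Let A be an associative ring with 1. Let M be an invertible n×n matrix over the Novikov ring A((z)) with inverse M⁻¹, and let k, ℓ be natural numbers such that every entry of z^k·M and every entry of z^ℓ·M⁻¹ lies in the subring A[[z]]. Let P be the quotient of A[[z]]^n (as a right A-module) by the right A[[z]]-submodule { (z^k·M)·v : v ∈ A[[z]]^n }. Then multiplication by z on A[[z]]^n preserves this submodule and hence descends to a well-defined right A-linear endomorphism ν of P, and ν is nilpotent; more precisely ν^{k+ℓ} = 0. -/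
/-!
Since `z` is central in `A((z))`, clearing denominators in `M * M' = 1` gives `N * N' = z ^ (k + ℓ)`
over `A[[z]]`. Hence `z ^ (k + ℓ) • v = N *ᵥ (N' *ᵥ v)` lies in the image of `N` for every `v`,
and `z` commutes with `N`, so multiplication by `z` preserves that image.
-/

open Matrix

-- `op a` acts on `A⟦X⟧` by right multiplication by the constant `a`.
instance PowerSeries.smulCommClass_mulOpposite (A : Type*) [Ring A] :
    SMulCommClass (PowerSeries A) Aᵐᵒᵖ (PowerSeries A) where
  smul_comm f a g := by
    ext m
    simp only [smul_eq_mul, PowerSeries.coeff_mul, PowerSeries.coeff_smul, mul_smul_comm,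
      Finset.smul_sum]

theorem HahnSeries.commute_single_one_s8 {Γ R : Type*} [AddCommGroup Γ] [PartialOrder Γ]
    [IsOrderedAddMonoid Γ] [NonAssocSemiring R] (a : Γ) (x : HahnSeries Γ R) :
    Commute (single a (1 : R)) x := by
  ext c
  have hl := coeff_single_mul_add (r := (1 : R)) (x := x) (a := c - a) (b := a)
  have hr := coeff_mul_single_add (r := (1 : R)) (x := x) (a := c - a) (b := a)
  rw [sub_add_cancel] at hl hr
  rw [hl, hr, one_mul, mul_one]

theorem Matrix.smul_mul_smul_of_forall_commute {n α : Type*} [Fintype n] [Semiring α]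
    (a : α) {b : α} (hb : ∀ x, Commute b x) (M M' : Matrix n n α) :
    (a • M) * (b • M') = (a * b) • (M * M') := by
  ext i j
  simp only [mul_apply, smul_apply, smul_eq_mul, Finset.mul_sum]
  refine Finset.sum_congr rfl fun l _ => ?_
  rw [mul_assoc, ← mul_assoc (M i l), ← (hb (M i l)).eq, mul_assoc, mul_assoc]

theorem Matrix.mulVec_smul_of_forall_commute {m n α : Type*} [Fintype n] [Semiring α]
    {b : α} (hb : ∀ x, Commute b x) (M : Matrix m n α) (v : n → α) :
    M *ᵥ (b • v) = b • (M *ᵥ v) := by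
  ext i
  simp only [mulVec, dotProduct, Pi.smul_apply, smul_eq_mul, Finset.mul_sum]
  refine Finset.sum_congr rfl fun l _ => ?_
  rw [← mul_assoc, ← (hb (M i l)).eq, mul_assoc]

theorem Submodule.mapQ_pow_eq_zero {R M : Type*} [Ring R] [AddCommGroup M] [Module R M]
    (p : Submodule R M) {f : M →ₗ[R] M} (h : p ≤ p.comap f) {m : ℕ} (hm : ∀ x, (f ^ m) x ∈ p) :
    p.mapQ p f h ^ m = 0 := by
  rw [← Submodule.mapQ_pow]
  ext x
  simpa [Submodule.Quotient.mk_eq_zero] using hm x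

theorem PowerSeries.mul_eq_X_pow_smul_one_of_map_eq_smul {A n : Type*} [Ring A] [Fintype n]
    [DecidableEq n] {M M' : Matrix n n (HahnSeries ℤ A)} (hMM' : M * M' = 1) {k ℓ : ℕ}
    {N N' : Matrix n n (PowerSeries A)}
    (hN : HahnSeries.single (1 : ℤ) (1 : A) ^ k • M = N.map (HahnSeries.ofPowerSeries ℤ A))
    (hN' : HahnSeries.single (1 : ℤ) (1 : A) ^ ℓ • M' = N'.map (HahnSeries.ofPowerSeries ℤ A)) :
    N * N' = (PowerSeries.X : PowerSeries A) ^ (k + ℓ) • (1 : Matrix n n (PowerSeries A)) := by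
  apply Matrix.map_injective (HahnSeries.ofPowerSeries_injective (Γ := ℤ) (R := A))
  beta_reduce
  rw [Matrix.map_mul, ← hN, ← hN', smul_mul_smul_of_forall_commute _
    (fun x => (HahnSeries.commute_single_one_s8 1 x).pow_left ℓ), hMM', ← pow_add,
    smul_one_eq_diagonal, smul_one_eq_diagonal, diagonal_map (map_zero _), map_pow,
    HahnSeries.ofPowerSeries_X]

theorem novikov_cokernel_z_action_nilpotent_general (A : Type*) [Ring A] (n k ℓ : ℕ)
    (M M' : Matrix (Fin n) (Fin n) (HahnSeries ℤ A))
    (hMM' : M * M' = 1)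
    (N N' : Matrix (Fin n) (Fin n) (PowerSeries A))
    (hN : ((HahnSeries.single (1 : ℤ) (1 : A)) ^ k) • M =
      N.map (HahnSeries.ofPowerSeries ℤ A))
    (hN' : ((HahnSeries.single (1 : ℤ) (1 : A)) ^ ℓ) • M' =
      N'.map (HahnSeries.ofPowerSeries ℤ A)) :
    (∀ w ∈ Submodule.span Aᵐᵒᵖ {w : Fin n → PowerSeries A | ∃ v, w = N.mulVec v},
      (PowerSeries.X : PowerSeries A) • w ∈
        Submodule.span Aᵐᵒᵖ {w : Fin n → PowerSeries A | ∃ v, w = N.mulVec v}) ∧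
    ∃ ν : ((Fin n → PowerSeries A) ⧸
            Submodule.span Aᵐᵒᵖ {w : Fin n → PowerSeries A | ∃ v, w = N.mulVec v}) →ₗ[Aᵐᵒᵖ]
          ((Fin n → PowerSeries A) ⧸
            Submodule.span Aᵐᵒᵖ {w : Fin n → PowerSeries A | ∃ v, w = N.mulVec v}),
      (∀ v : Fin n → PowerSeries A,
        ν (Submodule.Quotient.mk v) =
          Submodule.Quotient.mk ((PowerSeries.X : PowerSeries A) • v)) ∧
      ν ^ (k + ℓ) = 0 := by
  set S := Submodule.span Aᵐᵒᵖ {w : Fin n → PowerSeries A | ∃ v, w = N.mulVec v}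
  let act := DistribMulAction.toModuleEnd (S := PowerSeries A) Aᵐᵒᵖ (Fin n → PowerSeries A)
  have hX (x : PowerSeries A) : Commute PowerSeries.X x := (PowerSeries.commute_X x).symm
  have hS : S ≤ S.comap (act PowerSeries.X) := Submodule.span_le.2 <| by
    rintro _ ⟨v, rfl⟩
    exact Submodule.subset_span ⟨PowerSeries.X • v, (mulVec_smul_of_forall_commute hX N v).symm⟩
  refine ⟨fun w hw => hS hw, S.mapQ S _ hS, fun v => rfl, S.mapQ_pow_eq_zero hS fun v => ?_⟩
  rw [← map_pow]
  refine Submodule.subset_span ⟨N' *ᵥ v, ?_⟩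
  rw [mulVec_mulVec, PowerSeries.mul_eq_X_pow_smul_one_of_map_eq_smul hMM' hN hN', smul_mulVec,
    one_mulVec]
  rfl

theorem novikov_cokernel_z_action_nilpotent (A : Type*) [Ring A] (n k ℓ : ℕ)
    (M M' : Matrix (Fin n) (Fin n) (HahnSeries ℤ A))
    (hMM' : M * M' = 1) (hM'M : M' * M = 1)
    (N N' : Matrix (Fin n) (Fin n) (PowerSeries A))
    (hN : ((HahnSeries.single (1 : ℤ) (1 : A)) ^ k) • M =
      N.map (HahnSeries.ofPowerSeries ℤ A))
    (hN' : ((HahnSeries.single (1 : ℤ) (1 : A)) ^ ℓ) • M' =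
      N'.map (HahnSeries.ofPowerSeries ℤ A)) :
    (∀ w ∈ Submodule.span Aᵐᵒᵖ {w : Fin n → PowerSeries A | ∃ v, w = N.mulVec v},
      (PowerSeries.X : PowerSeries A) • w ∈
        Submodule.span Aᵐᵒᵖ {w : Fin n → PowerSeries A | ∃ v, w = N.mulVec v}) ∧
    ∃ ν : ((Fin n → PowerSeries A) ⧸
            Submodule.span Aᵐᵒᵖ {w : Fin n → PowerSeries A | ∃ v, w = N.mulVec v}) →ₗ[Aᵐᵒᵖ]
          ((Fin n → PowerSeries A) ⧸
            Submodule.span Aᵐᵒᵖ {w : Fin n → PowerSeries A | ∃ v, w = N.mulVec v}),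
      (∀ v : Fin n → PowerSeries A,
        ν (Submodule.Quotient.mk v) =
          Submodule.Quotient.mk ((PowerSeries.X : PowerSeries A) • v)) ∧
      ν ^ (k + ℓ) = 0 :=
  novikov_cokernel_z_action_nilpotent_general A n k ℓ M M' hMM' N N' hN hN'
end

section
/- Let A be an associative ring with 1 and let N be a nilpotent n×n matrix over A, say N^r = 0. Define maps of right A-modules d : A[[z]]^n → A[[z]]^n by d(v) = z·v − N·v (viewing N entrywise as a matrix over A[[z]]), and π : A[[z]]^n → A^n by π(Σ_{j≥0} z^j x_j) = Σ_{j≥0} N^j·x_j (a finite sum since N is nilpotent), where x_j ∈ A^n is the vector of j-th coefficients. Then the sequence 0 → A[[z]]^n →(d) A[[z]]^n →(π) A^n → 0 is a split short exact sequence of right A-modules: d is injective, π is surjective, the image of d equals the kernel of π, and the maps σ : A^n → A[[z]]^n sending x to the constant series x, and τ : A[[z]]^n → A[[z]]^n sending Σ_{j≥0} z^j x_j to Σ_{j≥0} z^j (Σ_{m≥0} N^m·x_{j+m+1}), satisfy π∘σ = id, τ∘d = id, and d∘τ + σ∘π = id. -/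
/-!
Read on coefficient vectors, `d` sends `(x_j)` to `(x_{j-1} - N x_j)` (with `x_{-1} = 0`), so each
of the identities `τ ∘ d = id`, `π ∘ σ = id`, `d ∘ τ + σ ∘ π = id` is an instance of the telescoping
sum `Σ_{m<r} N^m (x_m - N x_{m+1}) = x_0 - N^r x_r`, whose last term vanishes. Injectivity,
surjectivity and exactness in the middle follow formally from these three identities.
-/

open PowerSeries Finset Matrix

namespace Matrix

variable {A ι : Type*} [Ring A] [Fintype ι] [DecidableEq ι]

theorem sum_pow_mulVec_sub_mulVec_succ (N : Matrix ι ι A) (x : ℕ → ι → A) (r : ℕ) :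
    ∑ m ∈ range r, (N ^ m) *ᵥ (x m - N *ᵥ x (m + 1)) = x 0 - (N ^ r) *ᵥ x r := by
  simp_rw [mulVec_sub, mulVec_mulVec, ← pow_succ]
  simpa using sum_range_sub' (fun m => (N ^ m) *ᵥ x m) r

theorem sum_pow_mulVec_sub_mulVec_sum (N : Matrix ι ι A) (x : ℕ → ι → A) (r : ℕ) :
    ∑ m ∈ range r, (N ^ m) *ᵥ x m - N *ᵥ ∑ m ∈ range r, (N ^ m) *ᵥ x (m + 1) =
      x 0 - (N ^ r) *ᵥ x r := by
  rw [← sum_pow_mulVec_sub_mulVec_succ, mulVec_sum, ← sum_sub_distrib]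
  simp_rw [mulVec_sub, mulVec_mulVec, ← pow_succ, ← pow_succ']

end Matrix

namespace NilpotentResolution

variable {A ι : Type*} [Ring A]

noncomputable def coeffVec (j : ℕ) (v : ι → PowerSeries A) : ι → A := fun i => coeff j (v i)

theorem coeffVec_injective : Function.Injective (fun v : ι → PowerSeries A => (coeffVec · v)) :=
  fun _ _ h => funext fun i => PowerSeries.ext fun j => congrFun (congrFun h j) i

@[simp]
theorem coeffVec_add (j : ℕ) (v w : ι → PowerSeries A) :
    coeffVec j (v + w) = coeffVec j v + coeffVec j w :=
  funext fun _ => map_add _ _ _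

noncomputable def σ (x : ι → A) : ι → PowerSeries A := fun i => C (x i)

@[simp]
theorem σ_zero : σ (0 : ι → A) = 0 :=
  funext fun _ => C.map_zero

theorem coeffVec_σ (x : ι → A) (j : ℕ) : coeffVec j (σ x) = if j = 0 then x else 0 := by
  ext i
  split_ifs <;> simp_all [σ, coeffVec, coeff_C]

section Fintype

variable [Fintype ι]

noncomputable def d (N : Matrix ι ι A) (v : ι → PowerSeries A) : ι → PowerSeries A :=
  (X : PowerSeries A) • v - N.map C *ᵥ v

theorem coeffVec_map_C_mulVec (j : ℕ) (M : Matrix ι ι A) (v : ι → PowerSeries A) :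
    coeffVec j (M.map C *ᵥ v) = M *ᵥ coeffVec j v := by
  ext i
  simp [coeffVec, mulVec, dotProduct, coeff_C_mul]

theorem coeffVec_d_zero (N : Matrix ι ι A) (v : ι → PowerSeries A) :
    coeffVec 0 (d N v) = -(N *ᵥ coeffVec 0 v) := by
  rw [← coeffVec_map_C_mulVec]
  ext i
  simp [d, coeffVec]

theorem coeffVec_d_succ (N : Matrix ι ι A) (v : ι → PowerSeries A) (j : ℕ) :
    coeffVec (j + 1) (d N v) = coeffVec j v - N *ᵥ coeffVec (j + 1) v := by
  rw [← coeffVec_map_C_mulVec]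
  ext i
  simp [d, coeffVec, coeff_succ_X_mul]

variable [DecidableEq ι]

noncomputable def π (N : Matrix ι ι A) (r : ℕ) (f : ι → PowerSeries A) : ι → A :=
  ∑ j ∈ range r, (N ^ j) *ᵥ coeffVec j f

noncomputable def τ (N : Matrix ι ι A) (r : ℕ) (f : ι → PowerSeries A) : ι → PowerSeries A :=
  fun i => mk fun j => (∑ m ∈ range r, (N ^ m) *ᵥ coeffVec (j + m + 1) f) i

theorem coeffVec_τ (N : Matrix ι ι A) (r : ℕ) (f : ι → PowerSeries A) (j : ℕ) :
    coeffVec j (τ N r f) = ∑ m ∈ range r, (N ^ m) *ᵥ coeffVec (j + m + 1) f := by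
  ext i
  simp [τ, coeffVec]

variable {N : Matrix ι ι A} {r : ℕ}

theorem τ_d (hr : N ^ r = 0) : Function.LeftInverse (τ N r) (d N) := fun v => by
  refine coeffVec_injective (funext fun j => ?_)
  simp only [coeffVec_τ, coeffVec_d_succ]
  exact (sum_pow_mulVec_sub_mulVec_succ N (fun m => coeffVec (j + m) v) r).trans
    (by rw [hr, zero_mulVec, sub_zero, add_zero])

theorem π_σ (hr : N ^ r = 0) : Function.LeftInverse (π N r) σ := fun x => by
  have h := sum_pow_mulVec_sub_mulVec_sum N (coeffVec · (σ x)) r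
  rw [hr, zero_mulVec, sub_zero] at h
  simpa [π, coeffVec_σ] using h

theorem d_τ_add_σ_π (hr : N ^ r = 0) (f : ι → PowerSeries A) :
    d N (τ N r f) + σ (π N r f) = f := by
  refine coeffVec_injective (funext fun j => ?_)
  cases j with
  | zero =>
    simp only [coeffVec_add, coeffVec_d_zero, coeffVec_τ, coeffVec_σ, ↓reduceIte, neg_add_eq_sub,
      zero_add]
    exact (sum_pow_mulVec_sub_mulVec_sum N (coeffVec · f) r).trans
      (by rw [hr, zero_mulVec, sub_zero])
  | succ j =>
    simp only [coeffVec_add, coeffVec_d_succ, coeffVec_τ, coeffVec_σ, Nat.add_one_ne_zero,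
      ↓reduceIte, add_zero, add_right_comm j 1]
    exact (sum_pow_mulVec_sub_mulVec_sum N (fun m => coeffVec (j + m + 1) f) r).trans
      (by rw [hr, zero_mulVec, sub_zero, add_zero])

theorem π_d (hr : N ^ r = 0) (v : ι → PowerSeries A) : π N r (d N v) = 0 := by
  refine (π_σ hr).injective ?_
  simpa [τ_d hr v] using d_τ_add_σ_π hr (d N v)

theorem π_eq_zero_iff (hr : N ^ r = 0) (f : ι → PowerSeries A) :
    π N r f = 0 ↔ ∃ v, d N v = f := by
  refine ⟨fun hf => ⟨τ N r f, ?_⟩, fun ⟨v, hv⟩ => hv ▸ π_d hr v⟩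
  simpa [hf] using d_τ_add_σ_π hr f

end Fintype

end NilpotentResolution

theorem power_series_resolution_of_nilpotent (A : Type*) [Ring A] (n r : ℕ)
    (N : Matrix (Fin n) (Fin n) A) (hr : N ^ r = 0) :
    -- d(v) = z·v − N·v
    let d : (Fin n → PowerSeries A) → (Fin n → PowerSeries A) :=
      fun v => (PowerSeries.X : PowerSeries A) • v - (N.map PowerSeries.C).mulVec v
    -- π(Σ z^j x_j) = Σ N^j x_j  (a finite sum since N^r = 0)
    let π : (Fin n → PowerSeries A) → (Fin n → A) :=
      fun f => ∑ j ∈ Finset.range r, (N ^ j).mulVec (fun i => PowerSeries.coeff j (f i))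
    -- σ(x) = the constant series x
    let σ : (Fin n → A) → (Fin n → PowerSeries A) :=
      fun x i => PowerSeries.C (x i)
    -- τ(Σ z^j x_j) = Σ z^j (Σ_m N^m x_{j+m+1})
    let τ : (Fin n → PowerSeries A) → (Fin n → PowerSeries A) :=
      fun f i => PowerSeries.mk fun j =>
        (∑ m ∈ Finset.range r,
          (N ^ m).mulVec (fun i' => PowerSeries.coeff (j + m + 1) (f i'))) i
    Function.Injective d ∧
    Function.Surjective π ∧
    (∀ f : Fin n → PowerSeries A, π f = 0 ↔ ∃ v, d v = f) ∧
    (∀ x : Fin n → A, π (σ x) = x) ∧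
    (∀ v : Fin n → PowerSeries A, τ (d v) = v) ∧
    (∀ f : Fin n → PowerSeries A, d (τ f) + σ (π f) = f) := by
  intro d π σ τ
  exact ⟨(NilpotentResolution.τ_d hr).injective, (NilpotentResolution.π_σ hr).surjective,
    NilpotentResolution.π_eq_zero_iff hr, NilpotentResolution.π_σ hr,
    NilpotentResolution.τ_d hr, NilpotentResolution.d_τ_add_σ_π hr⟩
end

section
/- Let H and K be groups, let φ : K → Aut(H) be a group homomorphism, and let G = H ⋊_φ K be the semidirect product, with i : H → G the canonical inclusion. Let i^{ab} : H^{ab} → G^{ab} be the induced homomorphism of abelianizations. Then the kernel of i^{ab} equals the subgroup of H^{ab} generated by the elements [φ(k)(h)]·[h]⁻¹ for all k ∈ K and h ∈ H, where [x] denotes the class of x ∈ H in H^{ab}. (Equivalently, viewing H^{ab} as a ℤ[K]-module via φ, the kernel is (ker ε)·H^{ab} for the augmentation ε : ℤ[K] → ℤ.) -/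
/-!
Conjugation by `inr k` acts on `inl H` through `φ k` and becomes trivial in the abelianization,
so every generator `[φ k h] [h]⁻¹` lies in the kernel. Conversely, if `N` is the subgroup they
generate, then `h ↦ [h] mod N` is a `φ`-invariant homomorphism to an abelian group, so it extends
to `H ⋊[φ] K` by sending `K` to `1`. Hence the quotient map `H^{ab} → H^{ab} / N` factors through
`Abelianization.map inl`, and the kernel of the latter is contained in `N`.
-/

namespace SemidirectProduct

variable {H K : Type*} [Group H] [Group K] {φ : K →* MulAut H}

theorem abelianization_of_inl_aut (k : K) (h : H) :
    Abelianization.of (inl (φ k h) : H ⋊[φ] K) = Abelianization.of (inl h) := by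
  rw [inl_aut, map_inv, map_mul, map_mul, map_inv, mul_right_comm, mul_inv_cancel, one_mul]

theorem ker_abelianization_map_inl_le {A : Type*} [CommGroup A] (f : H →* A)
    (hf : ∀ k h, f (φ k h) = f h) :
    (Abelianization.map (inl : H →* H ⋊[φ] K)).ker ≤ (Abelianization.lift f).ker := by
  have hfactor : Abelianization.lift f =
      (Abelianization.lift (lift (φ := φ) f 1 fun k => by ext h; simp [hf])).comp
        (Abelianization.map inl) := by
    ext h
    simp
  intro x hx
  rw [MonoidHom.mem_ker, hfactor, MonoidHom.comp_apply, hx, map_one]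

end SemidirectProduct

theorem ker_abelianization_map_of_semidirect_inl (H K : Type*) [Group H] [Group K]
    (φ : K →* MulAut H) :
    (Abelianization.map (SemidirectProduct.inl : H →* H ⋊[φ] K)).ker =
      Subgroup.closure
        {x : Abelianization H |
          ∃ (k : K) (h : H), x = Abelianization.of (φ k h) * (Abelianization.of h)⁻¹} := by
  set N := Subgroup.closure {x : Abelianization H |
    ∃ (k : K) (h : H), x = Abelianization.of (φ k h) * (Abelianization.of h)⁻¹}
  refine le_antisymm ?_ ((Subgroup.closure_le _).mpr ?_)
  · let f : H →* Abelianization H ⧸ N := (QuotientGroup.mk' N).comp Abelianization.of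
    have hf : ∀ k h, f (φ k h) = f h := fun k h =>
      QuotientGroup.eq_iff_div_mem.mpr
        (Subgroup.subset_closure ⟨k, h, div_eq_mul_inv _ _⟩)
    have hlift : Abelianization.lift f = QuotientGroup.mk' N :=
      Abelianization.hom_ext _ _ rfl
    simpa only [hlift, QuotientGroup.ker_mk'] using
      SemidirectProduct.ker_abelianization_map_inl_le (K := K) f hf
  · rintro _ ⟨k, h, rfl⟩
    simp [SemidirectProduct.abelianization_of_inl_aut]
end

section
/- Let A be an associative ring with 1, let α be a unit of A and β an element of A with α·β ≠ β·α. In the unit group of A[[z]], let u = ι(α) be the constant unit α and let x = 1 + β·z (a Witt vector, hence a unit). Then the commutator w = u·x·u⁻¹·x⁻¹ satisfies: (1) w is a Witt vector, i.e. a unit of A[[z]] with constant coefficient 1; (2) the coefficient of z in w equals α·β·α⁻¹ − β, which is nonzero; (3) w lies in the commutator subgroup of (A[[z]])ˣ but does not lie in the commutator subgroup of the group W(A) of Witt vectors. Consequently the homomorphism W(A)^{ab} → ((A[[z]])ˣ)^{ab} induced by the inclusion W(A) ⊆ (A[[z]])ˣ is not injective. -/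
/-!
On Witt vectors the coefficient of `z` is additive,
`(1 + a z + …)(1 + b z + …) = 1 + (a + b) z + …`, so it is a homomorphism from `W(A)` to
an abelian group and vanishes on `[W(A), W(A)]`. The commutator `⁅α, 1 + β z⁆` is a Witt
vector with `z`-coefficient `α β α⁻¹ - β ≠ 0`; it lies in `[A[[z]]ˣ, A[[z]]ˣ]` but not in
`[W(A), W(A)]`, so its class in `W(A)^{ab}` is a nonzero element of the kernel of
`W(A)^{ab} → (A[[z]]ˣ)^{ab}`.
-/

open PowerSeries

theorem Abelianization.map_subtype_not_injective {G : Type*} [Group G] {H : Subgroup G} (h : H)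
    (hG : (h : G) ∈ commutator G) (hH : h ∉ commutator H) :
    ¬ Function.Injective (Abelianization.map H.subtype) := by
  intro hinj
  apply hH
  rw [← Abelianization.ker_of, MonoidHom.mem_ker]
  apply hinj
  rw [map_one, Abelianization.map_of, ← MonoidHom.mem_ker, Abelianization.ker_of]
  exact hG

namespace PowerSeries

variable {A : Type*} [Ring A]

theorem coeff_one_mul_of_constantCoeff_eq_one {φ ψ : A⟦X⟧} (hφ : constantCoeff φ = 1)
    (hψ : constantCoeff ψ = 1) : coeff 1 (φ * ψ) = coeff 1 φ + coeff 1 ψ := by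
  have h : Finset.HasAntidiagonal.antidiagonal (1 : ℕ) = {(0, 1), (1, 0)} := rfl
  rw [coeff_mul, h, Finset.sum_insert (by decide), Finset.sum_singleton,
    coeff_zero_eq_constantCoeff, hφ, hψ, one_mul, mul_one, add_comm]

theorem coeff_one_C_mul_mul_C (a b : A) (φ : A⟦X⟧) :
    coeff 1 (C a * φ * C b) = a * coeff 1 φ * b := by
  rw [coeff_mul_C, coeff_C_mul]

variable (A) in
noncomputable abbrev wittVectors : Subgroup A⟦X⟧ˣ :=
  (Units.map (constantCoeff : A⟦X⟧ →+* A).toMonoidHom).ker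

theorem mem_wittVectors {g : A⟦X⟧ˣ} :
    g ∈ wittVectors A ↔ constantCoeff (g : A⟦X⟧) = 1 :=
  MonoidHom.mem_ker.trans Units.ext_iff

noncomputable def wittCoeffOne : wittVectors A →* Multiplicative A where
  toFun g := .ofAdd (coeff 1 (g : A⟦X⟧ˣ).val)
  map_one' := by simp [coeff_one]
  map_mul' g h := congrArg Multiplicative.ofAdd <|
    coeff_one_mul_of_constantCoeff_eq_one (mem_wittVectors.mp g.2) (mem_wittVectors.mp h.2)

theorem coeff_one_inv_of_mem_wittVectors {g : A⟦X⟧ˣ} (hg : g ∈ wittVectors A) :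
    coeff 1 (g⁻¹ : A⟦X⟧ˣ).val = -coeff 1 (g : A⟦X⟧) :=
  congrArg Multiplicative.toAdd (map_inv (wittCoeffOne (A := A)) ⟨g, hg⟩)

theorem coeff_one_eq_zero_of_mem_commutator {g : wittVectors A}
    (hg : g ∈ commutator (wittVectors A)) :
    coeff 1 (g : A⟦X⟧ˣ).val = 0 :=
  congrArg Multiplicative.toAdd (Abelianization.commutator_subset_ker (wittCoeffOne (A := A)) hg)

theorem conj_mul_inv_mem_wittVectors (u : A⟦X⟧ˣ) {g : A⟦X⟧ˣ} (hg : g ∈ wittVectors A) :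
    u * g * u⁻¹ * g⁻¹ ∈ wittVectors A :=
  mul_mem ((MonoidHom.normal_ker _).conj_mem g hg u) (inv_mem hg)

theorem coeff_one_C_commutator (α : Aˣ) {g : A⟦X⟧ˣ} (hg : g ∈ wittVectors A) :
    let u : A⟦X⟧ˣ := Units.map (C : A →+* A⟦X⟧).toMonoidHom α
    coeff 1 (u * g * u⁻¹ * g⁻¹).val =
      α * coeff 1 (g : A⟦X⟧) * (α⁻¹ : Aˣ) - coeff 1 (g : A⟦X⟧) := by
  intro u
  have hconj : u * g * u⁻¹ ∈ wittVectors A := (MonoidHom.normal_ker _).conj_mem g hg u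
  rw [Units.val_mul, coeff_one_mul_of_constantCoeff_eq_one (mem_wittVectors.mp hconj)
    (mem_wittVectors.mp (inv_mem hg)), coeff_one_inv_of_mem_wittVectors hg, ← sub_eq_add_neg]
  exact congrArg (· - _) (coeff_one_C_mul_mul_C _ _ _)

end PowerSeries

theorem Units.mul_mul_inv_sub_ne_zero {A : Type*} [Ring A] {α : Aˣ} {β : A}
    (h : (α : A) * β ≠ β * α) : (α : A) * β * (α⁻¹ : Aˣ) - β ≠ 0 :=
  sub_ne_zero.mpr fun h' => h ((Units.mul_inv_eq_iff_eq_mul _).mp h')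

theorem witt_abelianization_not_injective (A : Type*) [Ring A]
    (α : Aˣ) (β : A) (hαβ : (α : A) * β ≠ β * (α : A)) :
    -- u = ι(α), the constant unit; W = group of Witt vectors = ker of units of constantCoeff
    let u : (PowerSeries A)ˣ := Units.map (PowerSeries.C : A →+* PowerSeries A).toMonoidHom α
    let W : Subgroup (PowerSeries A)ˣ :=
      (Units.map (PowerSeries.constantCoeff : PowerSeries A →+* A).toMonoidHom).ker
    -- x = 1 + β·z is a unit of A[[z]]
    (∃ x : (PowerSeries A)ˣ,
      x.val = 1 + PowerSeries.C β * PowerSeries.X) ∧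
    (∀ x : (PowerSeries A)ˣ, x.val = 1 + PowerSeries.C β * PowerSeries.X →
      -- (1) w = u·x·u⁻¹·x⁻¹ is a Witt vector
      PowerSeries.constantCoeff (u * x * u⁻¹ * x⁻¹).val = 1 ∧
      -- (2) the coefficient of z in w is α·β·α⁻¹ − β ≠ 0
      PowerSeries.coeff 1 (u * x * u⁻¹ * x⁻¹).val =
        (α : A) * β * ((α⁻¹ : Aˣ) : A) - β ∧
      PowerSeries.coeff 1 (u * x * u⁻¹ * x⁻¹).val ≠ 0 ∧
      -- (3) w lies in [(A[[z]])ˣ, (A[[z]])ˣ] but not in [W(A), W(A)]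
      u * x * u⁻¹ * x⁻¹ ∈ commutator (PowerSeries A)ˣ ∧
      (∀ hw : u * x * u⁻¹ * x⁻¹ ∈ W,
        (⟨u * x * u⁻¹ * x⁻¹, hw⟩ : W) ∉ commutator W)) ∧
    -- consequently W(A)^{ab} → ((A[[z]])ˣ)^{ab} is not injective
    ¬ Function.Injective ⇑(Abelianization.map W.subtype) := by
  intro u W
  have hexists : ∃ x : A⟦X⟧ˣ, x.val = 1 + C β * X :=
    isUnit_iff_constantCoeff.mpr (by simp)
  have hne := Units.mul_mul_inv_sub_ne_zero hαβ
  have key (x : A⟦X⟧ˣ) (hx : x.val = 1 + C β * X) :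
      u * x * u⁻¹ * x⁻¹ ∈ W ∧
      coeff 1 (u * x * u⁻¹ * x⁻¹).val = α * β * (α⁻¹ : Aˣ) - β ∧
      u * x * u⁻¹ * x⁻¹ ∈ commutator A⟦X⟧ˣ ∧
      ∀ hw : u * x * u⁻¹ * x⁻¹ ∈ W,
        (⟨u * x * u⁻¹ * x⁻¹, hw⟩ : W) ∉ commutator W := by
    have hxW : x ∈ W := mem_wittVectors.mpr (by simp [hx])
    have hx1 : coeff 1 x.val = β := by simp [hx]
    have hc1 : coeff 1 (u * x * u⁻¹ * x⁻¹).val = α * β * (α⁻¹ : Aˣ) - β :=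
      hx1 ▸ coeff_one_C_commutator α hxW
    refine ⟨conj_mul_inv_mem_wittVectors u hxW, hc1,
      Subgroup.commutator_mem_commutator (Subgroup.mem_top u) (Subgroup.mem_top x), ?_⟩
    exact fun _ hmem => hne (hc1 ▸ coeff_one_eq_zero_of_mem_commutator hmem)
  refine ⟨hexists, fun x hx => ?_, ?_⟩
  · obtain ⟨hw, hc1, hcomm, hnot⟩ := key x hx
    exact ⟨mem_wittVectors.mp hw, hc1, hc1 ▸ hne, hcomm, hnot⟩
  · obtain ⟨x, hx⟩ := hexists
    obtain ⟨hw, -, hcomm, hnot⟩ := key x hx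
    exact Abelianization.map_subtype_not_injective ⟨_, hw⟩ hcomm (hnot hw)
end

section
/- Let A be an associative ring with 1. Let M and M' be invertible n×n matrices over the Novikov ring A((z)), and let k, k' be natural numbers such that every entry of z^k·M and of z^{k'}·M' lies in A[[z]]. Set M'' = M'·M and k'' = k + k', so every entry of z^{k''}·M'' lies in A[[z]]. Let P, P', P'' be the quotients of the right A[[z]]-module A[[z]]^n by the submodules { (z^k·M)·v }, { (z^{k'}·M')·v }, { (z^{k''}·M'')·v } respectively (v ranging over A[[z]]^n). Then the map P → P'' induced by v ↦ (z^{k'}·M')·v and the map P'' → P' induced by the identity of A[[z]]^n are well-defined right A-module homomorphisms fitting into a short exact sequence 0 → P → P'' → P' → 0 of right A-modules which commutes with the endomorphisms induced by multiplication by z on P, P'' and P'. -/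
/-!
Since `z` is central and invertible in `A((z))`, the matrix `N'·N` represents `z^{k+k'}·(M'·M)`,
and `N'` maps to the invertible matrix `z^{k'}·M'` over `A((z))`; as `A[[z]] → A((z))` is
injective, `v ↦ N'·v` is injective on `A[[z]]^n`. The sequence is then the cokernel sequence of
the composite `N'∘N` with `N'` injective: `N'·x = N'·N·u` forces `x = N·u`, which gives
injectivity of `P → P''`, and the image of `P` in `P''` is the image of `N'`, which is the kernel
of `P'' → P'`.
-/

/-- The quotient of the column module `A[[z]]^n` (a right `A`-module, i.e. an
`Aᵐᵒᵖ`-module) by the right submodule `{ N·v : v ∈ A[[z]]^n }`. -/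
def NovikovCoker (A : Type*) [Ring A] (n : ℕ)
    (N : Matrix (Fin n) (Fin n) (PowerSeries A)) :=
  (Fin n → PowerSeries A) ⧸
    Submodule.span Aᵐᵒᵖ {w : Fin n → PowerSeries A | ∃ v, w = N.mulVec v}

noncomputable instance (A : Type*) [Ring A] (n : ℕ)
    (N : Matrix (Fin n) (Fin n) (PowerSeries A)) :
    AddCommGroup (NovikovCoker A n N) :=
  Submodule.Quotient.addCommGroup _

instance (A : Type*) [Ring A] (n : ℕ) (N : Matrix (Fin n) (Fin n) (PowerSeries A)) :
    Module Aᵐᵒᵖ (NovikovCoker A n N) :=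
  Submodule.Quotient.module _

/-- The class of `v : A[[z]]^n` in `NovikovCoker A n N`. -/
def NovikovCoker.mk {A : Type*} [Ring A] {n : ℕ}
    {N : Matrix (Fin n) (Fin n) (PowerSeries A)} (v : Fin n → PowerSeries A) :
    NovikovCoker A n N :=
  Submodule.Quotient.mk v

open Matrix

theorem PowerSeries.op_smul_eq_mul_C_s15 {A : Type*} [Ring A] (a : A) (f : PowerSeries A) :
    MulOpposite.op a • f = f * C a := by
  ext n
  rw [coeff_mul_C, coeff_smul, MulOpposite.smul_eq_mul_unop, MulOpposite.unop_op]

instance PowerSeries.instSMulCommClassMulOpposite {A : Type*} [Ring A] :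
    SMulCommClass Aᵐᵒᵖ (PowerSeries A) (PowerSeries A) where
  smul_comm a f g := by
    rw [smul_eq_mul, smul_eq_mul, ← MulOpposite.op_unop a, PowerSeries.op_smul_eq_mul_C_s15,
      PowerSeries.op_smul_eq_mul_C_s15, mul_assoc]

section HahnSeries

variable {Γ R : Type*} [AddCommGroup Γ] [PartialOrder Γ] [IsOrderedAddMonoid Γ] [Semiring R]

theorem HahnSeries.commute_single_one_s15 (g : Γ) (x : HahnSeries Γ R) :
    Commute (single g (1 : R)) x := by
  ext c
  rw [coeff_single_mul, coeff_mul_single, one_mul, mul_one]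

theorem HahnSeries.isUnit_single_one (g : Γ) : IsUnit (single g (1 : R)) :=
  ⟨⟨single g 1, single (-g) 1, by simp [single_mul_single], by simp [single_mul_single]⟩,
    rfl⟩

end HahnSeries

section Matrix

variable {l m n α : Type*} [Semiring α] {c : α}

theorem Matrix.smul_eq_op_smul_of_commute (hc : ∀ a, Commute c a) (M : Matrix m n α) :
    c • M = MulOpposite.op c • M :=
  ext fun i j => (hc (M i j)).eq

variable [Fintype n]

theorem Matrix.mulVec_smul_of_commute (hc : ∀ a, Commute c a) (M : Matrix m n α)
    (v : n → α) : M *ᵥ (c • v) = c • (M *ᵥ v) := by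
  have hv : c • v = MulOpposite.op c • v := funext fun j => (hc (v j)).eq
  rw [hv, mulVec_smul]
  exact funext fun i => (hc _).eq.symm

theorem Matrix.smul_mul_smul_of_commute_s15 (c' : α) (hc : ∀ a, Commute c a) (M : Matrix m n α)
    (M' : Matrix n l α) : (c' * c) • (M * M') = (c' • M) * (c • M') := by
  rw [smul_mul, smul_eq_op_smul_of_commute hc M', Matrix.mul_smul,
    ← smul_eq_op_smul_of_commute hc, smul_smul]

theorem Matrix.isUnit_smul [DecidableEq n] (hc : IsUnit c) {M : Matrix n n α} (hM : IsUnit M) :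
    IsUnit (c • M) := by
  rw [smul_eq_diagonal_mul]
  exact (hc.map (scalar n)).mul hM

theorem Matrix.mulVec_injective_of_isUnit_map {β : Type*} [Semiring β] [DecidableEq n]
    {f : α →+* β} (hf : Function.Injective f) {N : Matrix n n α} (hN : IsUnit (N.map f)) :
    Function.Injective N.mulVec := by
  intro v w hvw
  have : N.map f *ᵥ (f ∘ v) = N.map f *ᵥ (f ∘ w) := funext fun i => by
    rw [← RingHom.map_mulVec, ← RingHom.map_mulVec, hvw]
  exact hf.comp_left (mulVec_injective_of_isUnit hN this)

section Span

variable {S : Type*} [Semiring S] [Module S α]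

variable [Fintype l] in
theorem Matrix.span_setOf_mul_mulVec_le (N' : Matrix m n α) (N : Matrix n l α) :
    Submodule.span S {w | ∃ v, w = (N' * N) *ᵥ v} ≤
      Submodule.span S {w | ∃ v, w = N' *ᵥ v} :=
  Submodule.span_le.2 fun _ ⟨v, hv⟩ =>
    Submodule.subset_span ⟨N *ᵥ v, by rw [hv, mulVec_mulVec]⟩

variable [SMulCommClass S α α]

theorem Matrix.span_setOf_mulVec_eq_range (N : Matrix m n α) :
    Submodule.span S {w | ∃ v, w = N *ᵥ v} = LinearMap.range (mulVecBilin α S N) := by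
  rw [← Submodule.span_eq (LinearMap.range _), LinearMap.coe_range]
  congr 1
  ext w
  simp [eq_comm]

variable [Fintype l]

theorem Matrix.span_setOf_mulVec_le_comap_mul (N' : Matrix m n α) (N : Matrix n l α) :
    Submodule.span S {w | ∃ v, w = N *ᵥ v} ≤
      (Submodule.span S {w | ∃ v, w = (N' * N) *ᵥ v}).comap (mulVecBilin α S N') :=
  Submodule.span_le.2 fun _ ⟨v, hv⟩ =>
    Submodule.subset_span ⟨v, by rw [mulVecBilin_apply, hv, mulVec_mulVec]⟩

theorem Matrix.comap_span_setOf_mul_mulVec_le {N' : Matrix m n α}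
    (hN' : Function.Injective N'.mulVec) (N : Matrix n l α) :
    (Submodule.span S {w | ∃ v, w = (N' * N) *ᵥ v}).comap (mulVecBilin α S N') ≤
      Submodule.span S {w | ∃ v, w = N *ᵥ v} := by
  intro x hx
  rw [Submodule.mem_comap, span_setOf_mulVec_eq_range] at hx
  obtain ⟨v, hv⟩ := hx
  exact Submodule.subset_span ⟨v, hN' (by simpa [mulVec_mulVec] using hv.symm)⟩

end Span

end Matrix

namespace Submodule

variable {R M M₂ : Type*} [Ring R] [AddCommGroup M] [Module R M] [AddCommGroup M₂]
  [Module R M₂] {p : Submodule R M} {q r : Submodule R M₂} (f : M →ₗ[R] M₂) (h : p ≤ q.comap f)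

theorem mapQ_injective_of_comap_le (h' : q.comap f ≤ p) : Function.Injective (p.mapQ q f h) := by
  rw [← LinearMap.ker_eq_bot, ker_mapQ, eq_bot_iff, ← mkQ_map_self p]
  exact map_mono h'

theorem range_mapQ_eq_ker_factor (hqr : q ≤ r) (hr : LinearMap.range f = r) :
    LinearMap.range (p.mapQ q f h) = LinearMap.ker (factor hqr) := by
  rw [range_mapQ, ker_mapQ, comap_id, hr]

theorem mapQ_comp_eq_comp_mapQ {s : M → M} {t : M₂ → M₂} (hst : ∀ x, f (s x) = t (f x))
    {σ : (M ⧸ p) →ₗ[R] M ⧸ p} {τ : (M₂ ⧸ q) →ₗ[R] M₂ ⧸ q}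
    (hσ : ∀ x, σ (Quotient.mk x) = Quotient.mk (s x))
    (hτ : ∀ x, τ (Quotient.mk x) = Quotient.mk (t x)) :
    p.mapQ q f h ∘ₗ σ = τ ∘ₗ p.mapQ q f h :=
  linearMap_qext _ <| LinearMap.ext fun x => by simp [hσ, hτ, hst]

end Submodule

theorem novikov_cokernel_short_exact_sequence_general (A : Type*) [Ring A] (n k k' : ℕ)
    (M M' : Matrix (Fin n) (Fin n) (HahnSeries ℤ A)) (hM' : IsUnit M')
    (N N' : Matrix (Fin n) (Fin n) (PowerSeries A))
    (hN : ((HahnSeries.single (1 : ℤ) (1 : A)) ^ k) • M =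
      N.map (HahnSeries.ofPowerSeries ℤ A))
    (hN' : ((HahnSeries.single (1 : ℤ) (1 : A)) ^ k') • M' =
      N'.map (HahnSeries.ofPowerSeries ℤ A)) :
    -- every entry of `z^{k+k'}·(M'·M)` lies in `A[[z]]`, with power series matrix `N'·N`
    ((HahnSeries.single (1 : ℤ) (1 : A)) ^ (k + k')) • (M' * M) =
      (N' * N).map (HahnSeries.ofPowerSeries ℤ A) ∧
    -- the short exact sequence 0 → P → P'' → P' → 0 of right A-modules
    ∃ (f : NovikovCoker A n N →ₗ[Aᵐᵒᵖ] NovikovCoker A n (N' * N))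
      (g : NovikovCoker A n (N' * N) →ₗ[Aᵐᵒᵖ] NovikovCoker A n N'),
      (∀ v : Fin n → PowerSeries A, f (NovikovCoker.mk v) = NovikovCoker.mk (N'.mulVec v)) ∧
      (∀ v : Fin n → PowerSeries A, g (NovikovCoker.mk v) = NovikovCoker.mk v) ∧
      Function.Injective f ∧ Function.Surjective g ∧ LinearMap.range f = LinearMap.ker g ∧
      -- `f` commutes with the endomorphisms induced by multiplication by `z`
      (∀ (νP : NovikovCoker A n N →ₗ[Aᵐᵒᵖ] NovikovCoker A n N)
         (νP'' : NovikovCoker A n (N' * N) →ₗ[Aᵐᵒᵖ] NovikovCoker A n (N' * N)),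
        (∀ v : Fin n → PowerSeries A,
          νP (NovikovCoker.mk v) = NovikovCoker.mk ((PowerSeries.X : PowerSeries A) • v)) →
        (∀ v : Fin n → PowerSeries A,
          νP'' (NovikovCoker.mk v) = NovikovCoker.mk ((PowerSeries.X : PowerSeries A) • v)) →
        f ∘ₗ νP = νP'' ∘ₗ f) ∧
      -- `g` commutes with the endomorphisms induced by multiplication by `z`
      (∀ (νP'' : NovikovCoker A n (N' * N) →ₗ[Aᵐᵒᵖ] NovikovCoker A n (N' * N))
         (νP' : NovikovCoker A n N' →ₗ[Aᵐᵒᵖ] NovikovCoker A n N'),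
        (∀ v : Fin n → PowerSeries A,
          νP'' (NovikovCoker.mk v) = NovikovCoker.mk ((PowerSeries.X : PowerSeries A) • v)) →
        (∀ v : Fin n → PowerSeries A,
          νP' (NovikovCoker.mk v) = NovikovCoker.mk ((PowerSeries.X : PowerSeries A) • v)) →
        g ∘ₗ νP'' = νP' ∘ₗ g) := by
  have hzk_central : ∀ x : HahnSeries ℤ A,
      Commute (HahnSeries.single (1 : ℤ) (1 : A) ^ k) x :=
    fun x => (HahnSeries.commute_single_one_s15 1 x).pow_left k
  refine ⟨by rw [add_comm, _root_.pow_add, smul_mul_smul_of_commute_s15 _ hzk_central, hN, hN',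
    Matrix.map_mul], ?_⟩
  have hN'_inj : Function.Injective N'.mulVec :=
    mulVec_injective_of_isUnit_map HahnSeries.ofPowerSeries_injective
      (hN' ▸ isUnit_smul ((HahnSeries.isUnit_single_one 1).pow k') hM')
  have hpq := span_setOf_mulVec_le_comap_mul (S := Aᵐᵒᵖ) N' N
  have hqr := span_setOf_mul_mulVec_le (S := Aᵐᵒᵖ) N' N
  refine ⟨Submodule.mapQ _ _ _ hpq, Submodule.factor hqr, fun _ => rfl, fun _ => rfl,
    Submodule.mapQ_injective_of_comap_le _ hpq (comap_span_setOf_mul_mulVec_le hN'_inj N),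
    Submodule.factor_surjective hqr,
    Submodule.range_mapQ_eq_ker_factor _ hpq hqr (span_setOf_mulVec_eq_range N').symm,
    fun _ _ hσ hτ => Submodule.mapQ_comp_eq_comp_mapQ _ hpq
      (mulVec_smul_of_commute (fun a => (PowerSeries.commute_X a).symm) N') hσ hτ,
    fun _ _ hσ hτ =>
      Submodule.mapQ_comp_eq_comp_mapQ _ hqr (s := (PowerSeries.X • ·)) (fun _ => rfl) hσ hτ⟩

theorem novikov_cokernel_short_exact_sequence (A : Type*) [Ring A] (n k k' : ℕ)
    (M M' : Matrix (Fin n) (Fin n) (HahnSeries ℤ A)) (hM : IsUnit M) (hM' : IsUnit M')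
    (N N' : Matrix (Fin n) (Fin n) (PowerSeries A))
    (hN : ((HahnSeries.single (1 : ℤ) (1 : A)) ^ k) • M =
      N.map (HahnSeries.ofPowerSeries ℤ A))
    (hN' : ((HahnSeries.single (1 : ℤ) (1 : A)) ^ k') • M' =
      N'.map (HahnSeries.ofPowerSeries ℤ A)) :
    -- every entry of `z^{k+k'}·(M'·M)` lies in `A[[z]]`, with power series matrix `N'·N`
    ((HahnSeries.single (1 : ℤ) (1 : A)) ^ (k + k')) • (M' * M) =
      (N' * N).map (HahnSeries.ofPowerSeries ℤ A) ∧
    -- the short exact sequence 0 → P → P'' → P' → 0 of right A-modules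
    ∃ (f : NovikovCoker A n N →ₗ[Aᵐᵒᵖ] NovikovCoker A n (N' * N))
      (g : NovikovCoker A n (N' * N) →ₗ[Aᵐᵒᵖ] NovikovCoker A n N'),
      (∀ v : Fin n → PowerSeries A, f (NovikovCoker.mk v) = NovikovCoker.mk (N'.mulVec v)) ∧
      (∀ v : Fin n → PowerSeries A, g (NovikovCoker.mk v) = NovikovCoker.mk v) ∧
      Function.Injective f ∧ Function.Surjective g ∧ LinearMap.range f = LinearMap.ker g ∧
      -- `f` commutes with the endomorphisms induced by multiplication by `z`
      (∀ (νP : NovikovCoker A n N →ₗ[Aᵐᵒᵖ] NovikovCoker A n N)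
         (νP'' : NovikovCoker A n (N' * N) →ₗ[Aᵐᵒᵖ] NovikovCoker A n (N' * N)),
        (∀ v : Fin n → PowerSeries A,
          νP (NovikovCoker.mk v) = NovikovCoker.mk ((PowerSeries.X : PowerSeries A) • v)) →
        (∀ v : Fin n → PowerSeries A,
          νP'' (NovikovCoker.mk v) = NovikovCoker.mk ((PowerSeries.X : PowerSeries A) • v)) →
        f ∘ₗ νP = νP'' ∘ₗ f) ∧
      -- `g` commutes with the endomorphisms induced by multiplication by `z`
      (∀ (νP'' : NovikovCoker A n (N' * N) →ₗ[Aᵐᵒᵖ] NovikovCoker A n (N' * N))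
         (νP' : NovikovCoker A n N' →ₗ[Aᵐᵒᵖ] NovikovCoker A n N'),
        (∀ v : Fin n → PowerSeries A,
          νP'' (NovikovCoker.mk v) = NovikovCoker.mk ((PowerSeries.X : PowerSeries A) • v)) →
        (∀ v : Fin n → PowerSeries A,
          νP' (NovikovCoker.mk v) = NovikovCoker.mk ((PowerSeries.X : PowerSeries A) • v)) →
        g ∘ₗ νP'' = νP' ∘ₗ g) :=
  novikov_cokernel_short_exact_sequence_general A n k k' M M' hM' N N' hN hN'
end
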